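/- arXiv:1011.2372 — 3 statements merged into one kernel-verified Lean document; each statement's English description precedes it below -/
import Mathlib

section
/- A bounded subset A of a real Banach space X is weakly relatively compact if and only if for every sequence (x_n) in A there exists x ∈ X such that x*(x) ≤ limsup_n x*(x_n) for all x* ∈ X*. -/
noncomputable section
open Filter Topology Set NormedSpace Pointwise

variable {X : Type*} [NormedAddCommGroup X] [NormedSpace ℝ X] [CompleteSpace X]

/-- `B` is a boundary for `X`: a subset of the dual unit sphere on which every
element of `X` attains its norm. -/
def IsBoundary (B : Set (StrongDual ℝ X)) : Prop :=
  (∀ f ∈ B, ‖f‖ = 1) ∧ ∀ x : X, ∃ f ∈ B, f x = ‖x‖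

/-- The closure of `S` in the topology `σ_B` of pointwise convergence on `B`. -/
def sigmaClosure (B : Set (StrongDual ℝ X)) (S : Set X) : Set X :=
  {x | ∀ ε > (0 : ℝ), ∀ F : Finset (StrongDual ℝ X), (F : Set (StrongDual ℝ X)) ⊆ B →
    ∃ y ∈ S, ∀ f ∈ F, |f x - f y| < ε}

/-!
If the weak closure of `A` is compact, a weak cluster point `x₀` of `(xₙ)` satisfies
`f x₀ ≤ limsup f (xₙ)` for every functional `f`.

Conversely, by Banach–Alaoglu the weak* closure of `A` in the bidual is compact, so it suffices
to show that it lies in `X`. Given `z` in it, a diagonal construction (as in Whitehead's proof of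
the Eberlein–Šmulian theorem) produces `xₙ ∈ A` and a countable subset `D` of the unit ball of
`X*` such that `f xₙ → z f` for `f ∈ D` and `D` norms, up to a factor 2, the span `M` of `z` and
the `xₙ`. A point `x₀` given by the hypothesis agrees with `z` on `D` (apply it to `±f`) and lies
in the closed span of the `xₙ` (Hahn–Banach), so `z - x₀` lies in the closure of `M` and vanishes
on `D`, hence is zero.
-/

open Bornology Submodule StrongDual

section

variable {E : Type*} [NormedAddCommGroup E] [NormedSpace ℝ E]

theorem isBounded_range_apply_of_forall_mem {A : Set E} (hA : IsBounded A) {x : ℕ → E}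
    (hx : ∀ n, x n ∈ A) (f : StrongDual ℝ E) : IsBounded (range fun n => f (x n)) :=
  (f.lipschitz.isBounded_image hA).subset (range_subset_iff.2 fun n => mem_image_of_mem f (hx n))

theorem exists_le_limsup_of_isCompact_closure {A : Set E} (hA : IsBounded A)
    (hc : IsCompact (closure (toWeakSpace ℝ E '' A))) {x : ℕ → E} (hx : ∀ n, x n ∈ A) :
    ∃ x₀ : E, ∀ f : StrongDual ℝ E, f x₀ ≤ limsup (fun n => f (x n)) atTop := by
  obtain ⟨p, -, hp⟩ := hc.exists_mapClusterPt (u := fun n => toWeakSpace ℝ E (x n)) (f := atTop)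
    (tendsto_principal.2 (.of_forall fun n => subset_closure (mem_image_of_mem _ (hx n))))
  refine ⟨(toWeakSpace ℝ E).symm p, fun f => ?_⟩
  have hf : Continuous fun q : WeakSpace ℝ E => f ((toWeakSpace ℝ E).symm q) :=
    WeakBilin.eval_continuous _ f
  exact (hp.continuousAt_comp hf.continuousAt).le_limsup
    (isBounded_range_apply_of_forall_mem hA hx f).bddAbove.isBoundedUnder_of_range

theorem exists_finset_norming (V : Submodule ℝ (StrongDual ℝ E)) [FiniteDimensional ℝ V] :
    ∃ G : Finset E, (∀ y ∈ G, ‖y‖ ≤ 1) ∧ ∀ u ∈ V, ∃ y ∈ G, ‖u‖ ≤ 2 * |u y| := by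
  classical
  let U (y : Metric.closedBall (0 : E) 1) : Set V := {v | 1 < 2 * |(v : StrongDual ℝ E) y|}
  have hU : ∀ y, IsOpen (U y) := fun y =>
    isOpen_lt continuous_const (continuous_const.mul
      ((ContinuousLinearMap.apply ℝ ℝ (y : E)).continuous.comp continuous_subtype_val).abs)
  have hcover : Metric.sphere (0 : V) 1 ⊆ ⋃ y, U y := by
    intro v hv
    obtain ⟨y, hy, hvy⟩ := (v : StrongDual ℝ E).exists_lt_apply_of_lt_opNorm (r := 1 / 2)
      (by rw [show ‖(v : StrongDual ℝ E)‖ = 1 from mem_sphere_zero_iff_norm.1 hv]; norm_num)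
    exact mem_iUnion.2 ⟨⟨y, mem_closedBall_zero_iff.2 hy.le⟩, by
      simp only [U, mem_ofPred_eq]; rw [Real.norm_eq_abs] at hvy; linarith⟩
  obtain ⟨t, ht⟩ := (isCompact_sphere (0 : V) 1).elim_finite_subcover U hU hcover
  refine ⟨insert 0 (t.map (Function.Embedding.subtype _)), ?_, fun u hu => ?_⟩
  · simp only [Finset.mem_insert, Finset.mem_map, Function.Embedding.coe_subtype]
    rintro _ (rfl | ⟨y, -, rfl⟩)
    · simp
    · exact mem_closedBall_zero_iff.1 y.2
  rcases eq_or_ne u 0 with rfl | hu0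
  · exact ⟨0, Finset.mem_insert_self _ _, by simp⟩
  have hnu : 0 < ‖u‖ := norm_pos_iff.2 hu0
  have hv : ‖u‖⁻¹ • (⟨u, hu⟩ : V) ∈ Metric.sphere (0 : V) 1 := by
    refine mem_sphere_zero_iff_norm (E := V) |>.2 ?_
    show ‖(‖u‖⁻¹ • u : StrongDual ℝ E)‖ = 1
    rw [norm_smul, norm_inv, norm_norm, inv_mul_cancel₀ hnu.ne']
  obtain ⟨y, hyt, hy⟩ := mem_iUnion₂.1 (ht hv)
  refine ⟨y, Finset.mem_insert_of_mem (Finset.mem_map_of_mem _ hyt), ?_⟩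
  simp only [U, mem_ofPred_eq, coe_smul, smul_apply, smul_eq_mul, abs_mul,
    abs_inv, abs_norm] at hy
  rw [mul_left_comm, ← div_eq_inv_mul, lt_div_iff₀ hnu, one_mul] at hy
  exact hy.le

theorem eq_zero_of_mem_closure_of_forall_apply_eq_zero
    {M : Submodule ℝ (StrongDual ℝ E)} {D : Set E} (hD : ∀ y ∈ D, ‖y‖ ≤ 1)
    (hM : ∀ u ∈ M, ∃ y ∈ D, ‖u‖ ≤ 2 * |u y|) {w : StrongDual ℝ E}
    (hw : w ∈ closure (M : Set (StrongDual ℝ E))) (hwD : ∀ y ∈ D, w y = 0) : w = 0 := by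
  have key : ∀ u ∈ M, ‖w‖ ≤ 3 * dist w u := by
    intro u hu
    obtain ⟨y, hyD, hy⟩ := hM u hu
    have hu_le : |u y| ≤ dist w u :=
      calc |u y| = ‖(u - w) y‖ := by rw [sub_apply, hwD y hyD, sub_zero, Real.norm_eq_abs]
        _ ≤ ‖u - w‖ * ‖y‖ := (u - w).le_opNorm y
        _ ≤ dist w u := by
          rw [dist_comm, dist_eq_norm]; exact mul_le_of_le_one_right (norm_nonneg _) (hD y hyD)
    linarith [norm_le_insert' w u, dist_eq_norm w u]
  refine norm_le_zero_iff.1 (le_of_forall_pos_le_add fun ε hε => ?_)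
  obtain ⟨u, hu, hwu⟩ := Metric.mem_closure_iff.1 hw (ε / 3) (by positivity)
  linarith [key u hu]

theorem exists_mem_forall_abs_sub_lt_of_mem_closure {S : Set (StrongDual ℝ E)}
    {z : StrongDual ℝ E} (hz : toWeakDual z ∈ closure (toWeakDual '' S)) (G : Finset E)
    {ε : ℝ} (hε : 0 < ε) : ∃ s ∈ S, ∀ y ∈ G, |s y - z y| < ε := by
  have hnear : ∀ᶠ w in 𝓝 (toWeakDual z), ∀ y ∈ G, |w y - z y| < ε :=
    (eventually_all_finset G).2 fun y _ =>
      (WeakDual.eval_continuous y).continuousAt.eventually (Metric.ball_mem_nhds (z y) hε)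
  obtain ⟨_, ⟨s, hs, rfl⟩, hsz⟩ :=
    ((mem_closure_iff_frequently.1 hz).and_eventually hnear).exists
  exact ⟨s, hs, hsz⟩

theorem exists_increasing_approx_norming {S : Set (StrongDual ℝ E)} {z : StrongDual ℝ E}
    (hz : toWeakDual z ∈ closure (toWeakDual '' S)) :
    ∃ (G : ℕ → Finset E) (F : ℕ → Finset (StrongDual ℝ E)) (s : ℕ → StrongDual ℝ E),
      Monotone G ∧ Monotone F ∧ z ∈ F 0 ∧
      (∀ n, s n ∈ S ∧ s n ∈ F (n + 1) ∧ ∀ y ∈ G n, |s n y - z y| < 1 / (n + 1)) ∧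
      (∀ n, ∀ y ∈ G n, ‖y‖ ≤ 1) ∧
      ∀ n, ∀ u ∈ span ℝ (F n : Set (StrongDual ℝ E)), ∃ y ∈ G n, ‖u‖ ≤ 2 * |u y| := by
  classical
  choose pick hpickS hpick using fun (G : Finset E) (n : ℕ) =>
    exists_mem_forall_abs_sub_lt_of_mem_closure hz G (Nat.one_div_pos_of_nat (n := n))
  choose norming hnorming1 hnorming using fun F : Finset (StrongDual ℝ E) =>
    exists_finset_norming (span ℝ (F : Set (StrongDual ℝ E)))
  -- `st n = (G n, F n)` with `F n = {z, s 0, …, s (n - 1)}`; `s n` is picked `1/(n+1)`-close to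
  -- `z` on `G n`, and `G (n + 1)` adds to `G n` a set norming the span of `F (n + 1)`.
  let step (n : ℕ) (p : Finset E × Finset (StrongDual ℝ E)) :
      Finset E × Finset (StrongDual ℝ E) :=
    (p.1 ∪ norming (insert (pick p.1 n) p.2), insert (pick p.1 n) p.2)
  let st (n : ℕ) : Finset E × Finset (StrongDual ℝ E) := Nat.rec (norming {z}, {z}) step n
  refine ⟨fun n => (st n).1, fun n => (st n).2, fun n => pick (st n).1 n,
    monotone_nat_of_le_succ fun n => Finset.subset_union_left,
    monotone_nat_of_le_succ fun n => Finset.subset_insert _ _, Finset.mem_singleton_self z,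
    fun n => ⟨hpickS _ _, Finset.mem_insert_self _ _, hpick _ _⟩, fun n => ?_, ?_⟩
  · induction n with
    | zero => exact hnorming1 _
    | succ n ih =>
      intro y hy
      rcases Finset.mem_union.1 hy with hy | hy
      exacts [ih y hy, hnorming1 _ y hy]
  · rintro (_ | n) u hu
    · exact hnorming _ u hu
    · obtain ⟨y, hy, hyu⟩ := hnorming _ u hu
      exact ⟨y, Finset.mem_union_right _ hy, hyu⟩

theorem exists_seq_tendsto_of_mem_closure {S : Set (StrongDual ℝ E)} {z : StrongDual ℝ E}
    (hz : toWeakDual z ∈ closure (toWeakDual '' S)) :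
    ∃ s : ℕ → StrongDual ℝ E, (∀ n, s n ∈ S) ∧ ∃ D : Set E, (∀ y ∈ D, ‖y‖ ≤ 1) ∧
      (∀ y ∈ D, Tendsto (fun n => s n y) atTop (𝓝 (z y))) ∧
      ∀ u ∈ span ℝ (insert z (range s)), ∃ y ∈ D, ‖u‖ ≤ 2 * |u y| := by
  obtain ⟨G, F, s, hG, hF, hzF, hs, hG1, hGF⟩ := exists_increasing_approx_norming hz
  refine ⟨s, fun n => (hs n).1, ⋃ n, (G n : Set E), ?_, ?_, fun u hu => ?_⟩
  · simp only [mem_iUnion]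
    rintro y ⟨n, hy⟩
    exact hG1 n y hy
  · simp only [mem_iUnion]
    rintro y ⟨m, hy⟩
    refine tendsto_iff_dist_tendsto_zero.2
      (squeeze_zero' (.of_forall fun n => dist_nonneg) ?_ tendsto_one_div_add_atTop_nhds_zero_nat)
    filter_upwards [eventually_ge_atTop m] with n hn
    exact ((hs n).2.2 y (hG hn hy)).le
  have hsub : insert z (range s) ⊆ ⋃ n, (F n : Set (StrongDual ℝ E)) :=
    insert_subset (mem_iUnion.2 ⟨0, hzF⟩)
      (range_subset_iff.2 fun n => mem_iUnion.2 ⟨n + 1, (hs n).2.1⟩)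
  have hdir : Directed (· ≤ ·) fun n => span ℝ (F n : Set (StrongDual ℝ E)) :=
    Monotone.directed_le fun m n h => span_mono (Finset.coe_subset.2 (hF h))
  have hu' := span_mono hsub hu
  rw [span_iUnion] at hu'
  obtain ⟨n, hn⟩ := (mem_iSup_of_directed _ hdir).1 hu'
  obtain ⟨y, hy, hyu⟩ := hGF n u hn
  exact ⟨y, mem_iUnion.2 ⟨n, hy⟩, hyu⟩

theorem mem_closure_span_of_forall_le_limsup {x : ℕ → E}
    (hx : ∀ f : StrongDual ℝ E, IsBoundedUnder (· ≥ ·) atTop fun n => f (x n)) {x₀ : E}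
    (hx₀ : ∀ f : StrongDual ℝ E, f x₀ ≤ limsup (fun n => f (x n)) atTop) :
    x₀ ∈ closure (span ℝ (range x) : Set E) := by
  by_contra h
  obtain ⟨f, c, hfc, hcx₀⟩ :=
    geometric_hahn_banach_closed_point (span ℝ (range x)).convex.closure isClosed_closure h
  have : limsup (fun n => f (x n)) atTop ≤ c :=
    limsup_le_of_le (hx f).isCoboundedUnder_le (Eventually.of_forall fun n =>
      (hfc _ (subset_closure (subset_span (mem_range_self n)))).le)
  linarith [hx₀ f]

theorem apply_eq_of_forall_le_limsup {x : ℕ → E} {x₀ : E}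
    (hx₀ : ∀ f : StrongDual ℝ E, f x₀ ≤ limsup (fun n => f (x n)) atTop) {f : StrongDual ℝ E}
    {c : ℝ} (hf : Tendsto (fun n => f (x n)) atTop (𝓝 c)) : f x₀ = c := by
  have hneg := hx₀ (-f)
  simp only [neg_apply, hf.neg.limsup_eq] at hneg
  linarith [hf.limsup_eq ▸ hx₀ f]

theorem mem_range_inclusionInDoubleDual_of_mem_closure {A : Set E} (hA : IsBounded A)
    (hA_limsup : ∀ x : ℕ → E, (∀ n, x n ∈ A) →
      ∃ x₀ : E, ∀ f : StrongDual ℝ E, f x₀ ≤ limsup (fun n => f (x n)) atTop)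
    {z : StrongDual ℝ (StrongDual ℝ E)}
    (hz : toWeakDual z ∈ closure (toWeakDual '' (inclusionInDoubleDual ℝ E '' A))) :
    z ∈ range (inclusionInDoubleDual ℝ E) := by
  obtain ⟨s, hs, D, hD1, hDlim, hDnorm⟩ := exists_seq_tendsto_of_mem_closure hz
  set M := span ℝ (insert z (range s))
  choose x hxA hxs using hs
  obtain rfl : (fun n => inclusionInDoubleDual ℝ E (x n)) = s := funext hxs
  obtain ⟨x₀, hx₀⟩ := hA_limsup x hxA
  have hx₀D : ∀ y ∈ D, y x₀ = z y := fun y hy =>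
    apply_eq_of_forall_le_limsup hx₀ (by simpa only [dual_def] using hDlim y hy)
  have hx₀span : x₀ ∈ closure (span ℝ (range x) : Set E) :=
    mem_closure_span_of_forall_le_limsup (fun f =>
      (isBounded_range_apply_of_forall_mem hA hxA f).bddBelow.isBoundedUnder_of_range) hx₀
  have hJx₀ : inclusionInDoubleDual ℝ E x₀ ∈ closure (M : Set (StrongDual ℝ (StrongDual ℝ E))) :=
    map_mem_closure (inclusionInDoubleDual ℝ E).continuous hx₀span fun u hu => by
      have h := apply_mem_span_image_of_mem_span (inclusionInDoubleDual ℝ E).toLinearMap hu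
      rw [← range_comp] at h
      exact span_mono (subset_insert _ _) h
  have hw :
      z - inclusionInDoubleDual ℝ E x₀ ∈ closure (M : Set (StrongDual ℝ (StrongDual ℝ E))) :=
    map_mem_closure (continuous_const.sub continuous_id) hJx₀ fun u hu =>
      M.sub_mem (subset_span (mem_insert z _)) hu
  refine ⟨x₀, (sub_eq_zero.1 (eq_zero_of_mem_closure_of_forall_apply_eq_zero hD1 hDnorm hw
    fun y hy => ?_)).symm⟩
  rw [sub_apply, dual_def, hx₀D y hy, sub_self]

theorem isCompact_closure_of_forall_exists_le_limsup {A : Set E} (hA : IsBounded A)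
    (hA_limsup : ∀ x : ℕ → E, (∀ n, x n ∈ A) →
      ∃ x₀ : E, ∀ f : StrongDual ℝ E, f x₀ ≤ limsup (fun n => f (x n)) atTop) :
    IsCompact (closure (toWeakSpace ℝ E '' A)) := by
  refine isCompact_closure_of_isBounded ℝ E _
    (by rwa [(toWeakSpace ℝ E).injective.preimage_image]) fun z hz => ?_
  obtain ⟨x₀, hx₀⟩ := mem_range_inclusionInDoubleDual_of_mem_closure hA hA_limsup
    (z := WeakDual.toStrongDual z) (by rw [image_image] at hz ⊢; exact hz)
  exact ⟨toWeakSpace ℝ E x₀, hx₀⟩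

end

theorem wrc_iff_limsup (A : Set X) (hA : Bornology.IsBounded A) :
    IsCompact (closure ((toWeakSpace ℝ X) '' A)) ↔
      ∀ x : ℕ → X, (∀ n, x n ∈ A) →
        ∃ x₀ : X, ∀ f : StrongDual ℝ X, f x₀ ≤ limsup (fun n => f (x n)) atTop :=
  ⟨fun hc _ hx => exists_le_limsup_of_isCompact_closure hA hc hx,
    isCompact_closure_of_forall_exists_le_limsup hA⟩
end
end

section
/- Let A ⊆ X be bounded and ε ≥ 0. If for every sequence (x_n) in A the intersection over k of the norm-closed convex hulls of ({x_n : n ≥ k} + ε·B_X) is nonempty, then A is 2ε-weakly relatively compact, i.e., every element of the weak*-closure of A in X** has distance at most 2ε from X. -/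
/-!
Suppose `φ` lies in the weak*-closure of `A` and `2ε < c < dist(φ, X)`. Interleave points
`xₙ ∈ A` and functionals `fₙ` of norm at most one such that `φ(fₙ) - fₙ(xᵢ) > c` for `i < n`
and `fᵢ(xₙ) → φ(fᵢ)`: the first is a finite minimax statement (Sion's theorem on the convex hull
of `x₀, …, xₙ₋₁` against the dual unit ball), the second is weak*-approximation of `φ` on
`f₀, …, fₙ`. A point `y` of `⋂ₖ closure (conv ({xₙ : n ≥ k} + ε B))` then satisfies
`fₙ(y) ≥ φ(fₙ) - ε` for every `n`. But for some `N`, `y` lies within `c - 2ε` of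
`conv ({xᵢ : i < N} + ε B)`, whence `f_N(y) < φ(f_N) - c + ε + (c - 2ε) = φ(f_N) - ε`.
-/

noncomputable section
open Filter Topology Set NormedSpace Pointwise

variable {X : Type*} [NormedAddCommGroup X] [NormedSpace ℝ X] [CompleteSpace X]

/-- The weak*-closure of a set of functionals (pointwise convergence on the predual). -/
def weakStarClosure {Y : Type*} [NormedAddCommGroup Y] [NormedSpace ℝ Y]
    (S : Set (StrongDual ℝ Y)) : Set (StrongDual ℝ Y) :=
  {φ | ∀ ε > (0 : ℝ), ∀ F : Finset Y, ∃ ψ ∈ S, ∀ y ∈ F, |φ y - ψ y| < ε}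

/-- `A` is `δ`-weakly relatively compact: every element of the weak*-closure of
`A` in the bidual is within distance `δ` of `X`. -/
def EpsWRC (A : Set X) (δ : ℝ) : Prop :=
  ∀ φ ∈ weakStarClosure ((inclusionInDoubleDual ℝ X) '' A),
    Metric.infDist φ (Set.range (inclusionInDoubleDual ℝ X)) ≤ δ

section

variable {E : Type*} [NormedAddCommGroup E] [NormedSpace ℝ E]

theorem StrongDual.exists_norm_le_one_lt_apply (ψ : StrongDual ℝ E) {c : ℝ} (hc : c < ‖ψ‖) :
    ∃ g : E, ‖g‖ ≤ 1 ∧ c < ψ g := by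
  obtain ⟨g, hg, hcg⟩ := ψ.exists_lt_apply_of_lt_opNorm hc
  rcases lt_abs.1 hcg with hcg | hcg
  · exact ⟨g, hg.le, hcg⟩
  · exact ⟨-g, by rw [norm_neg]; exact hg.le, by rwa [map_neg]⟩

theorem StrongDual.apply_le_norm_of_norm_le_one {f : StrongDual ℝ E} (hf : ‖f‖ ≤ 1) (v : E) :
    f v ≤ ‖v‖ :=
  (le_abs_self _).trans ((f.le_of_opNorm_le hf v).trans_eq (one_mul _))

theorem IsCompact.exists_norm_le_one_forall_lt_sub {K : Set E} (hK : IsCompact K)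
    (hKc : Convex ℝ K) (φ : StrongDual ℝ (StrongDual ℝ E)) {c : ℝ}
    (hφ : ∀ z ∈ K, c < ‖φ - inclusionInDoubleDual ℝ E z‖) :
    ∃ g : StrongDual ℝ E, ‖g‖ ≤ 1 ∧ ∀ z ∈ K, c < φ g - g z := by
  rcases K.eq_empty_or_nonempty with rfl | hKne
  · exact ⟨0, by simp, by simp⟩
  have hpt (z : E) (hz : z ∈ K) :
      ∃ g ∈ Metric.closedBall (0 : StrongDual ℝ E) 1, c < φ g - g z := by
    obtain ⟨g, hg, hcg⟩ := (φ - inclusionInDoubleDual ℝ E z).exists_norm_le_one_lt_apply (hφ z hz)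
    exact ⟨g, by simpa using hg, hcg⟩
  choose! g hgB hg using hpt
  obtain ⟨t, htK, hcover⟩ := hK.elim_nhds_subcover (fun z => {z' | c < φ (g z) - g z z'})
    fun z hz => (isOpen_lt continuous_const (by fun_prop)).mem_nhds (hg z hz)
  have hcont_z (g : StrongDual ℝ E) : Continuous fun z => φ g - g z := by fun_prop
  have hcont_g (z : E) : Continuous fun g : StrongDual ℝ E => φ g - g z := by fun_prop
  obtain ⟨g₀, hg₀B, hg₀⟩ := Sion.exists_lt_iInf_of_lt_iInf_of_finite hKne hK
    (fun g _ => (hcont_z g).lowerSemicontinuous.lowerSemicontinuousOn K)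
    (fun g _ => ((convexOn_const _ hKc).sub (g.toLinearMap.concaveOn hKc)).quasiconvexOn)
    (convex_closedBall 0 1)
    (fun z _ => (hcont_g z).upperSemicontinuous.upperSemicontinuousOn _)
    (fun z _ => ((φ - inclusionInDoubleDual ℝ E z).toLinearMap.concaveOn
      (convex_closedBall 0 1)).quasiconcaveOn)
    hKc (t.finite_toSet.image g) (image_subset_iff.2 fun z hz => hgB z (htK z hz))
    fun z hz => by
      obtain ⟨w, hw, hzw⟩ := mem_iUnion₂.1 (hcover hz)
      exact ⟨g w, mem_image_of_mem g hw, hzw⟩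
  exact ⟨g₀, by simpa using hg₀B, hg₀⟩

theorem exists_interleaved_seq {α β : Type*} [DecidableEq α] [DecidableEq β]
    (F : Finset α → β) (G : ℕ → Finset β → α) :
    ∃ (x : ℕ → α) (f : ℕ → β), ∀ n,
      f n = F ((Finset.range n).image x) ∧ x n = G n ((Finset.range (n + 1)).image f) := by
  let s : ℕ → Finset α × Finset β := fun n => Nat.rec (∅, ∅)
    (fun n p => (insert (G n (insert (F p.1) p.2)) p.1, insert (F p.1) p.2)) n
  let f n := F (s n).1
  let x n := G n (insert (f n) (s n).2)
  have hs (n : ℕ) : s n = ((Finset.range n).image x, (Finset.range n).image f) := by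
    induction n with
    | zero => rfl
    | succ n ih =>
      change (insert (x n) (s n).1, insert (f n) (s n).2) = _
      rw [ih, Finset.range_add_one, Finset.image_insert, Finset.image_insert]
  refine ⟨x, f, fun n => ⟨congrArg F (congrArg Prod.fst (hs n)), ?_⟩⟩
  change G n (insert (f n) (s n).2) = _
  rw [hs, Finset.range_add_one, Finset.image_insert]

theorem apply_le_add_of_mem_closure_convexHull_add_smul_closedBall {f : StrongDual ℝ E}
    (hf : ‖f‖ ≤ 1) {S : Set E} {r ε : ℝ} (hε : 0 ≤ ε) (hS : ∀ v ∈ S, f v ≤ r) :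
    ∀ v ∈ closure (convexHull ℝ (S + ε • Metric.closedBall (0 : E) 1)), f v ≤ r + ε := by
  refine closure_minimal (convexHull_min ?_ (convex_halfSpace_le f.toLinearMap.isLinear _))
    (isClosed_le f.continuous continuous_const)
  rintro _ ⟨s, hs, _, ⟨b, hb, rfl⟩, rfl⟩
  have hfb : ε * f b ≤ ε := mul_le_of_le_one_right hε
    ((StrongDual.apply_le_norm_of_norm_le_one hf b).trans (by simpa using hb))
  change f (s + ε • b) ≤ r + ε
  rw [map_add, map_smul, smul_eq_mul]
  linarith [hS s hs]

theorem sub_le_apply_of_tendsto_of_mem_iInter {f : StrongDual ℝ E} (hf : ‖f‖ ≤ 1)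
    {x : ℕ → E} {a ε : ℝ} (hε : 0 ≤ ε) (hx : Tendsto (fun m => f (x m)) atTop (𝓝 a)) {y : E}
    (hy : y ∈ ⋂ k : ℕ, closure (convexHull ℝ
      ({v : E | ∃ n ≥ k, v = x n} + ε • Metric.closedBall (0 : E) 1))) :
    a - ε ≤ f y := by
  refine le_of_forall_pos_le_add fun η hη => ?_
  obtain ⟨k, hk⟩ := eventually_atTop.1 (hx.eventually (lt_mem_nhds (sub_lt_self a hη)))
  have := apply_le_add_of_mem_closure_convexHull_add_smul_closedBall (f := -f)
    (by rwa [norm_neg]) (r := η - a) hε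
    (by rintro _ ⟨n, hn, rfl⟩; rw [neg_apply]; linarith [hk n hn]) y (mem_iInter.1 hy k)
  rw [neg_apply] at this
  linarith

theorem exists_apply_lt_of_mem_closure_convexHull_range {x : ℕ → E} {f : ℕ → StrongDual ℝ E}
    (hf : ∀ n, ‖f n‖ ≤ 1) {b : ℕ → ℝ} (hb : ∀ n i, i < n → f n (x i) ≤ b n) {ε : ℝ}
    (hε : 0 ≤ ε) {y : E}
    (hy : y ∈ closure (convexHull ℝ (range x + ε • Metric.closedBall (0 : E) 1)))
    {δ : ℝ} (hδ : 0 < δ) : ∃ N, f N y < b N + ε + δ := by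
  let U N := convexHull ℝ (x '' Iio N + ε • Metric.closedBall (0 : E) 1)
  have hU : convexHull ℝ (range x + ε • Metric.closedBall (0 : E) 1) ⊆ ⋃ N, U N := by
    refine convexHull_min ?_ (Directed.convex_iUnion ?_ fun N => convex_convexHull ℝ _)
    · rintro _ ⟨_, ⟨i, rfl⟩, w, hw, rfl⟩
      exact mem_iUnion.2
        ⟨i + 1, subset_convexHull ℝ _ ⟨x i, ⟨i, Nat.lt_succ_self i, rfl⟩, w, hw, rfl⟩⟩
    · exact Monotone.directed_le fun M N hMN =>
        convexHull_mono (add_subset_add_right (image_mono (Iio_subset_Iio hMN)))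
  obtain ⟨v, hv, hyv⟩ := Metric.mem_closure_iff.1 (closure_mono hU hy) δ hδ
  obtain ⟨N, hvN⟩ := mem_iUnion.1 hv
  have hfv := apply_le_add_of_mem_closure_convexHull_add_smul_closedBall (hf N) hε
    (by rintro _ ⟨i, hi, rfl⟩; exact hb N i hi) v (subset_closure hvN)
  have hfyv : f N y - f N v ≤ dist y v := by
    rw [← map_sub, dist_eq_norm]
    exact StrongDual.apply_le_norm_of_norm_le_one (hf N) _
  exact ⟨N, by linarith⟩

theorem exists_seq_separated_of_mem_weakStarClosure {A : Set E}
    {φ : StrongDual ℝ (StrongDual ℝ E)}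
    (hφ : φ ∈ weakStarClosure (inclusionInDoubleDual ℝ E '' A)) {c : ℝ}
    (hc : c < Metric.infDist φ (range (inclusionInDoubleDual ℝ E))) :
    ∃ (x : ℕ → E) (f : ℕ → StrongDual ℝ E), (∀ n, x n ∈ A) ∧ (∀ n, ‖f n‖ ≤ 1) ∧
      (∀ n i, i < n → c < φ (f n) - f n (x i)) ∧
      ∀ n, Tendsto (fun m => f n (x m)) atTop (𝓝 (φ (f n))) := by
  classical
  have hsep (P : Finset E) : ∃ g : StrongDual ℝ E, ‖g‖ ≤ 1 ∧ ∀ z ∈ P, c < φ g - g z := by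
    obtain ⟨g, hg, hgP⟩ :=
      (P.finite_toSet.isCompact_convexHull ℝ).exists_norm_le_one_forall_lt_sub
        (convex_convexHull ℝ _) φ fun z _ => hc.trans_le <|
          (Metric.infDist_le_dist_of_mem (mem_range_self z)).trans_eq (dist_eq_norm φ _)
    exact ⟨g, hg, fun z hz => hgP z (subset_convexHull ℝ _ hz)⟩
  have happrox (n : ℕ) (Q : Finset (StrongDual ℝ E)) :
      ∃ a ∈ A, ∀ g ∈ Q, |φ g - g a| < 1 / (n + 1) := by
    obtain ⟨_, ⟨a, ha, rfl⟩, hQ⟩ := hφ _ Nat.one_div_pos_of_nat Q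
    exact ⟨a, ha, hQ⟩
  choose F hF hFsep using hsep
  choose G hGA hG using happrox
  obtain ⟨x, f, hxf⟩ := exists_interleaved_seq F G
  refine ⟨x, f, fun n => ?_, fun n => ?_, fun n i hi => ?_, fun n => ?_⟩
  · rw [(hxf n).2]; exact hGA _ _
  · rw [(hxf n).1]; exact hF _
  · rw [(hxf n).1]; exact hFsep _ _ (Finset.mem_image_of_mem x (Finset.mem_range.2 hi))
  · rw [tendsto_iff_norm_sub_tendsto_zero]
    refine squeeze_zero_norm' ?_ tendsto_one_div_add_atTop_nhds_zero_nat
    filter_upwards [eventually_ge_atTop n] with m hm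
    rw [norm_norm, Real.norm_eq_abs, abs_sub_comm, (hxf m).2]
    exact (hG _ _ _ (Finset.mem_image_of_mem f (Finset.mem_range.2 (Nat.lt_succ_of_le hm)))).le

end

theorem chains_imp_epsWRC_general (A : Set X)
    (ε : ℝ) (hε : 0 ≤ ε)
    (h : ∀ x : ℕ → X, (∀ n, x n ∈ A) →
      (⋂ k : ℕ, closure (convexHull ℝ
        ({y : X | ∃ n ≥ k, y = x n} + ε • Metric.closedBall (0 : X) 1))).Nonempty) :
    EpsWRC A (2 * ε) := by
  intro φ hφ
  by_contra! hφε
  obtain ⟨c, hεc, hcφ⟩ := exists_between hφε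
  obtain ⟨x, f, hxA, hf, hsep, hlim⟩ := exists_seq_separated_of_mem_weakStarClosure hφ hcφ
  obtain ⟨y, hy⟩ := h x hxA
  have hy₀ : y ∈ closure (convexHull ℝ (range x + ε • Metric.closedBall (0 : X) 1)) :=
    closure_mono (convexHull_mono (add_subset_add_right (by rintro _ ⟨n, -, rfl⟩; exact ⟨n, rfl⟩)))
      (mem_iInter.1 hy 0)
  obtain ⟨N, hN⟩ := exists_apply_lt_of_mem_closure_convexHull_range hf
    (b := fun n => φ (f n) - c) (fun n i hi => by linarith [hsep n i hi]) hε hy₀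
    (by linarith : 0 < c - 2 * ε)
  linarith [sub_le_apply_of_tendsto_of_mem_iInter (hf N) hε (hlim N) hy]

theorem chains_imp_epsWRC (A : Set X) (hA : Bornology.IsBounded A)
    (ε : ℝ) (hε : 0 ≤ ε)
    (h : ∀ x : ℕ → X, (∀ n, x n ∈ A) →
      (⋂ k : ℕ, closure (convexHull ℝ
        ({y : X | ∃ n ≥ k, y = x n} + ε • Metric.closedBall (0 : X) 1))).Nonempty) :
    EpsWRC A (2 * ε) :=
  chains_imp_epsWRC_general A ε hε h
end
end

section
/- Let B be a weak*-separable boundary for X and A a bounded infinite subset of X. Then there exists a countably infinite set F ⊆ A such that the norm-closed convex hull of F equals the σ_B-closed convex hull of F. -/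
noncomputable section
open Filter Topology Set NormedSpace Pointwise

variable {X : Type*} [NormedAddCommGroup X] [NormedSpace ℝ X] [CompleteSpace X]

/-- `B` is separable in the weak* topology. -/
def WeakStarSeparable (B : Set (StrongDual ℝ X)) : Prop :=
  ∃ D ⊆ B, D.Countable ∧ B ⊆ weakStarClosure D

/-!
Enumerate a weak*-dense countable subset of `B` as `(d k)`; since `B` is a boundary, it separates
points. Pass to a sequence `(x n)` of distinct points of `A` along which every `d k (x n)`
converges, to `ξ k` say. If some `v` with `d k v = ξ k` for all `k` is not the `σ_B`-limit of
`(x n)`, a functional `b ∈ B` witnesses this, and a further subsequence makes `b (x n)` converge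
to a value other than `b v`; adjoining `b` to the `d k`, no point realizes the limits any more.
So we may assume that every such `v` is the `σ_B`-limit of `(x n)`, hence lies in the norm-closed
convex hull `K` of the `x n` by Simons' inequality.

Now let `x₀` be in the `σ_B`-closure of `co {x n}`. Convex combinations are described by
coefficient sequences in the compact set of subprobability sequences `ν`, on which
`ν ↦ ξ k + ∑ ν n (d k (x n) - ξ k)` is continuous because its coefficients tend to `0`. Hence
`d k x₀ = d k (∑ ν n x n) + (1 - ∑ ν n) ξ k` for one such `ν` and all `k`, i.e.
`x₀ = ∑ ν n x n + (1 - ∑ ν n) v` with `d k v = ξ k`: a countable convex combination of points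
of `K`, so `x₀ ∈ K`.
-/

def subSimplex : Set (ℕ → ℝ) :=
  {ν | (∀ n, 0 ≤ ν n) ∧ ∀ N, ∑ n ∈ Finset.range N, ν n ≤ 1}

theorem isCompact_subSimplex : IsCompact subSimplex := by
  have hclosed : IsClosed subSimplex := by
    simp only [subSimplex, Set.ofPred_and, Set.ofPred_forall]
    exact (isClosed_iInter fun n => isClosed_le continuous_const (continuous_apply n)).inter
      (isClosed_iInter fun N => isClosed_le
        (continuous_finsetSum _ fun n _ => continuous_apply n) continuous_const)
  refine (isCompact_univ_pi fun _ => isCompact_Icc (a := (0 : ℝ)) (b := 1)).of_isClosed_subset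
    hclosed fun ν hν => Set.mem_univ_pi.2 fun n => ⟨hν.1 n, ?_⟩
  calc ν n ≤ ∑ m ∈ Finset.range (n + 1), ν m :=
        Finset.single_le_sum (fun m _ => hν.1 m) (Finset.self_mem_range_succ n)
    _ ≤ 1 := hν.2 _

theorem hasSum_tsum_le_one_of_mem_subSimplex {ν : ℕ → ℝ} (hν : ν ∈ subSimplex) :
    HasSum ν (∑' n, ν n) ∧ ∑' n, ν n ≤ 1 :=
  ⟨(summable_of_sum_range_le hν.1 hν.2).hasSum, Real.tsum_le_of_sum_range_le hν.1 hν.2⟩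

theorem abs_tsum_mul_sub_sum_le {ν : ℕ → ℝ} (hν : ν ∈ subSimplex) {c : ℕ → ℝ}
    (hsum : Summable fun n => ν n * c n) {N : ℕ} {η : ℝ} (hη : 0 ≤ η)
    (hc : ∀ n ≥ N, |c n| ≤ η) :
    |∑' n, ν n * c n - ∑ n ∈ Finset.range N, ν n * c n| ≤ η := by
  obtain ⟨hνsum, hν1⟩ := hasSum_tsum_le_one_of_mem_subSimplex hν
  have hνtail : Summable fun k => ν (k + N) := (summable_nat_add_iff N).2 hνsum.summable
  have htail_le : ∑' k, ν (k + N) ≤ 1 := by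
    have := hνsum.summable.sum_add_tsum_nat_add N
    linarith [Finset.sum_nonneg fun n (_ : n ∈ Finset.range N) => hν.1 n]
  rw [← hsum.sum_add_tsum_nat_add N, add_sub_cancel_left]
  have htail_sum : Summable fun k => ‖ν (k + N) * c (k + N)‖ :=
    ((summable_nat_add_iff N).2 hsum).norm
  calc |∑' k, ν (k + N) * c (k + N)|
      ≤ ∑' k, ‖ν (k + N) * c (k + N)‖ := norm_tsum_le_tsum_norm htail_sum
    _ ≤ ∑' k, ν (k + N) * η := by
        refine Summable.tsum_le_tsum (fun k => ?_) htail_sum (hνtail.mul_right η)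
        rw [Real.norm_eq_abs, abs_mul, abs_of_nonneg (hν.1 _)]
        exact mul_le_mul_of_nonneg_left (hc _ (Nat.le_add_left N k)) (hν.1 _)
    _ = (∑' k, ν (k + N)) * η := tsum_mul_right
    _ ≤ η := mul_le_of_le_one_left hη htail_le

theorem continuousOn_tsum_mul_of_tendsto_zero {c : ℕ → ℝ} (hc : Tendsto c atTop (𝓝 0)) :
    ContinuousOn (fun ν => ∑' n, ν n * c n) subSimplex := by
  obtain ⟨C, hC⟩ := hc.abs.bddAbove_range
  have hsum : ∀ ν ∈ subSimplex, Summable fun n => ν n * c n := fun ν hν =>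
    .of_norm_bounded ((hasSum_tsum_le_one_of_mem_subSimplex hν).1.summable.mul_right C)
      fun n => by
        rw [Real.norm_eq_abs, abs_mul, abs_of_nonneg (hν.1 n)]
        exact mul_le_mul_of_nonneg_left (hC ⟨n, rfl⟩) (hν.1 n)
  refine TendstoUniformlyOn.continuousOn (p := atTop)
    (F := fun N ν => ∑ n ∈ Finset.range N, ν n * c n) ?_
    (Frequently.of_forall fun N => (continuous_finsetSum _ fun n _ =>
      (continuous_apply n).mul continuous_const).continuousOn)
  rw [Metric.tendstoUniformlyOn_iff]
  intro ε hε
  obtain ⟨N₀, hN₀⟩ := (Metric.tendsto_atTop.1 hc) (ε / 2) (half_pos hε)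
  filter_upwards [eventually_ge_atTop N₀] with N hN ν hν
  rw [Real.dist_eq]
  refine (abs_tsum_mul_sub_sum_le hν (hsum ν hν) (half_pos hε).le fun n hn => ?_).trans_lt
    (half_lt_self hε)
  simpa using (hN₀ n (hN.trans hn)).le

theorem exists_subseq_tendsto_ne_of_not_tendsto {u : ℕ → ℝ} {M : ℝ} (hu : ∀ n, |u n| ≤ M)
    {a : ℝ} (h : ¬Tendsto u atTop (𝓝 a)) :
    ∃ γ ≠ a, ∃ ψ : ℕ → ℕ, StrictMono ψ ∧ Tendsto (u ∘ ψ) atTop (𝓝 γ) := by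
  obtain ⟨s, hs, hfreq⟩ := not_tendsto_iff_exists_frequently_notMem.1 h
  obtain ⟨γ, hγ, ψ, hψ, hlim⟩ := (isCompact_Icc.diff isOpen_interior).tendsto_subseq'
    (hfreq.mono fun n hn => ⟨abs_le.1 (hu n), fun hint => hn (interior_subset hint)⟩)
  exact ⟨γ, fun hγa => hγ.2 (hγa ▸ mem_interior_iff_mem_nhds.2 hs), ψ, hψ, hlim⟩

theorem exists_mem_subSimplex_hasSum_of_mem_convexHull {E : Type*} [AddCommGroup E]
    [Module ℝ E] [TopologicalSpace E] {x : ℕ → E} {y : E}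
    (hy : y ∈ convexHull ℝ (range x)) :
    ∃ ν ∈ subSimplex, HasSum ν 1 ∧ HasSum (fun n => ν n • x n) y := by
  rw [convexHull_range_eq_exists_affineCombination] at hy
  obtain ⟨s, w, hw0, hw1, rfl⟩ := hy
  set ν : ℕ → ℝ := fun n => if n ∈ s then w n else 0
  have hν0 : ∀ n, 0 ≤ ν n := fun n => by
    by_cases hn : n ∈ s <;> simp [ν, hn, hw0]
  have hν1 : HasSum ν 1 := by
    have hsum_s : ∑ n ∈ s, ν n = 1 := by
      rw [← hw1]
      exact Finset.sum_congr rfl fun n hn => by simp [ν, hn]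
    exact hsum_s ▸ hasSum_sum_of_ne_finset_zero fun n hn => if_neg hn
  refine ⟨ν, ⟨hν0, fun N => sum_le_hasSum _ (fun n _ => hν0 n) hν1⟩, hν1, ?_⟩
  have hsum_s : ∑ n ∈ s, ν n • x n = ∑ n ∈ s, w n • x n :=
    Finset.sum_congr rfl fun n hn => by simp [ν, hn]
  rw [Finset.affineCombination_eq_linear_combination s x w hw1, ← hsum_s]
  exact hasSum_sum_of_ne_finset_zero fun n hn => by simp [ν, hn]

section ConvexSeries

variable {E ι : Type*} [AddCommGroup E] [Module ℝ E] [TopologicalSpace E] [IsTopologicalAddGroup E]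
  [ContinuousSMul ℝ E]

theorem Convex.sub_smul_add_hasSum_mem {K : Set E} (hK : Convex ℝ K) (hKc : IsClosed K)
    {ν : ι → ℝ} {p : ι → E} {s : ℝ} {u v : E} (hν : ∀ i, 0 ≤ ν i) (hs : HasSum ν s)
    (hs1 : s ≤ 1) (hu : HasSum (fun i => ν i • p i) u) (hp : ∀ i, p i ∈ K) (hv : v ∈ K) :
    (1 - s) • v + u ∈ K := by
  have hpartial : ∀ F : Finset ι, (1 - ∑ i ∈ F, ν i) • v + ∑ i ∈ F, ν i • p i ∈ K := by
    intro F
    have hF1 : ∑ i ∈ F, ν i ≤ 1 := (sum_le_hasSum F (fun i _ => hν i) hs).trans hs1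
    rcases (Finset.sum_nonneg fun i _ => hν i).eq_or_lt with hzero | hpos
    · have hν0 : ∀ i ∈ F, ν i = 0 :=
        (Finset.sum_eq_zero_iff_of_nonneg fun i _ => hν i).1 hzero.symm
      rwa [← hzero, Finset.sum_eq_zero fun i hi => by rw [hν0 i hi, zero_smul], sub_zero,
        one_smul, add_zero]
    · have hmass := hK.centerMass_mem (fun i _ => hν i) hpos (fun i _ => hp i)
      have := hK hv hmass (sub_nonneg.2 hF1) hpos.le (sub_add_cancel 1 _)
      rwa [Finset.centerMass, smul_smul, mul_inv_cancel₀ hpos.ne', one_smul] at this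
  exact hKc.mem_of_tendsto (((tendsto_const_nhds.sub hs).smul_const v).add hu)
    (Eventually.of_forall hpartial)

theorem Convex.hasSum_mem {K : Set E} (hK : Convex ℝ K) (hKc : IsClosed K) {ν : ι → ℝ}
    {p : ι → E} {u : E} (hν : ∀ i, 0 ≤ ν i) (hs : HasSum ν 1)
    (hu : HasSum (fun i => ν i • p i) u) (hp : ∀ i, p i ∈ K) : u ∈ K := by
  obtain ⟨i⟩ : Nonempty ι := by
    by_contra h
    have := not_nonempty_iff.1 h
    simpa using hs.unique hasSum_empty
  simpa using hK.sub_smul_add_hasSum_mem hKc hν hs le_rfl hu hp (hp i)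

end ConvexSeries

section Dual

variable {E ι : Type*} [NormedAddCommGroup E] [NormedSpace ℝ E] {e : ι → StrongDual ℝ E}

theorem abs_apply_le_norm_of_norm_le_one {b : StrongDual ℝ E} (hb : ‖b‖ ≤ 1) (y : E) :
    |b y| ≤ ‖y‖ := by
  simpa using b.le_of_opNorm_le hb y

theorem closure_subset_sigmaClosure (B : Set (StrongDual ℝ E)) (S : Set E) :
    closure S ⊆ sigmaClosure B S := by
  intro x hx ε hε F _
  have hnear : ∀ᶠ y in 𝓝 x, ∀ f ∈ F, |f x - f y| < ε :=
    (eventually_all_finset F).2 fun f _ =>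
      (Metric.tendsto_nhds.1 (f.continuous.tendsto x) ε hε).mono fun y hy => by
        rwa [Real.dist_eq, abs_sub_comm] at hy
  obtain ⟨y, hyS, hy⟩ := ((mem_closure_iff_frequently.1 hx).and_eventually hnear).exists
  exact ⟨y, hyS, hy⟩

theorem sigmaClosure_anti {B B' : Set (StrongDual ℝ E)} (h : B' ⊆ B) (S : Set E) :
    sigmaClosure B S ⊆ sigmaClosure B' S :=
  fun _ hx ε hε F hF => hx ε hε F (hF.trans h)

theorem apply_mem_closure_image_of_mem_sigmaClosure {S : Set E} {x₀ : E}
    (hx₀ : x₀ ∈ sigmaClosure (range e) S) :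
    (fun i => e i x₀) ∈ closure ((fun y i => e i y) '' S) := by
  classical
  have hbasis := Filter.hasBasis_pi (f := fun i => 𝓝 (e i x₀)) fun i => Metric.nhds_basis_ball
  rw [← nhds_pi] at hbasis
  rw [mem_closure_iff_nhds_basis hbasis]
  rintro ⟨I, r⟩ ⟨hI, hr⟩
  have hsmall : ∀ᶠ ε in 𝓝[>] (0 : ℝ), ∀ i ∈ I, ε < r i :=
    (eventually_all_finite hI).2 fun i hi =>
      nhdsWithin_le_nhds (eventually_lt_nhds (hr i hi))
  obtain ⟨ε, hεr, hε⟩ := (hsmall.and self_mem_nhdsWithin).exists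
  obtain ⟨y, hyS, hy⟩ := hx₀ ε hε (hI.toFinset.image e) (by
    intro f hf
    obtain ⟨i, -, rfl⟩ := Finset.mem_image.1 hf
    exact ⟨i, rfl⟩)
  refine ⟨_, ⟨y, hyS, rfl⟩, fun i hi => ?_⟩
  rw [Metric.mem_ball, Real.dist_eq, abs_sub_comm]
  exact (hy (e i) (Finset.mem_image_of_mem e (hI.mem_toFinset.2 hi))).trans (hεr i hi)

theorem exists_mem_subSimplex_of_mem_sigmaClosure {x : ℕ → E} {ξ : ι → ℝ}
    (hlim : ∀ i, Tendsto (fun n => e i (x n)) atTop (𝓝 (ξ i))) {x₀ : E}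
    (hx₀ : x₀ ∈ sigmaClosure (range e) (convexHull ℝ (range x))) :
    ∃ ν ∈ subSimplex, ∀ i, e i x₀ = ξ i + ∑' n, ν n * (e i (x n) - ξ i) := by
  set Φ : (ℕ → ℝ) → ι → ℝ := fun ν i => ξ i + ∑' n, ν n * (e i (x n) - ξ i)
  have hΦ : ContinuousOn Φ subSimplex := continuousOn_pi.2 fun i =>
    continuousOn_const.add (continuousOn_tsum_mul_of_tendsto_zero (by
      simpa using (hlim i).sub_const (ξ i)))
  have himage : (fun y i => e i y) '' convexHull ℝ (range x) ⊆ Φ '' subSimplex := by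
    rintro _ ⟨y, hy, rfl⟩
    obtain ⟨ν, hν, hν1, hνy⟩ := exists_mem_subSimplex_hasSum_of_mem_convexHull hy
    refine ⟨ν, hν, funext fun i => ?_⟩
    have hsum : HasSum (fun n => ν n * (e i (x n) - ξ i)) (e i y - ξ i) := by
      simpa [mul_sub] using ((e i).hasSum hνy).sub (hν1.mul_right (ξ i))
    simp only [Φ, hsum.tsum_eq]
    ring
  obtain ⟨ν, hν, hΦν⟩ := closure_minimal himage
    (isCompact_subSimplex.image_of_continuousOn hΦ).isClosed
    (apply_mem_closure_image_of_mem_sigmaClosure hx₀)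
  exact ⟨ν, hν, fun i => (congrFun hΦν i).symm⟩

theorem IsBoundary.exists_seq_separating {B : Set (StrongDual ℝ E)} (hB : IsBoundary B)
    (hsep : WeakStarSeparable B) :
    ∃ d : ℕ → StrongDual ℝ E, (∀ k, d k ∈ B) ∧ ∀ u, (∀ k, d k u = 0) → u = 0 := by
  obtain ⟨D, hDB, hDcount, hBD⟩ := hsep
  have hDne : D.Nonempty := by
    obtain ⟨f, hf, -⟩ := hB.2 0
    obtain ⟨ψ, hψ, -⟩ := hBD hf 1 one_pos ∅
    exact ⟨ψ, hψ⟩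
  obtain ⟨d, rfl⟩ := hDcount.exists_eq_range hDne
  refine ⟨d, fun k => hDB ⟨k, rfl⟩, fun u hu => norm_le_zero_iff.1
    (le_of_forall_pos_lt_add fun δ hδ => ?_)⟩
  obtain ⟨f, hfB, hfu⟩ := hB.2 u
  obtain ⟨_, ⟨k, rfl⟩, hk⟩ := hBD hfB δ hδ {u}
  have := hk u (Finset.mem_singleton_self u)
  rw [hu k, sub_zero, hfu] at this
  linarith [le_abs_self ‖u‖]

theorem hasSum_inv_two_pow_succ : HasSum (fun j : ℕ => (2⁻¹ : ℝ) ^ (j + 1)) 1 := by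
  have := (hasSum_geometric_of_lt_one (r := (2⁻¹ : ℝ)) (by norm_num) (by norm_num)).mul_left 2⁻¹
  norm_num at this
  simpa [pow_succ'] using this

def geomHead (w : ℕ → E) (n : ℕ) : E :=
  ∑ i ∈ Finset.range n, (2⁻¹ : ℝ) ^ (i + 1) • w i

theorem exists_seq_almost_greedy {W : ℕ → Set E} (hne : ∀ n, (W n).Nonempty) {σ : ℕ → ℝ}
    (hσ : ∀ n, 0 < σ n) :
    ∃ w : ℕ → E, ∀ n, w n ∈ W n ∧ ∀ u ∈ W n,
      ‖geomHead w n + (2⁻¹ : ℝ) ^ n • w n‖ ≤ ‖geomHead w n + (2⁻¹ : ℝ) ^ n • u‖ + σ n := by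
  have happrox : ∀ n (h : E), ∃ u ∈ W n, ∀ u' ∈ W n,
      ‖h + (2⁻¹ : ℝ) ^ n • u‖ ≤ ‖h + (2⁻¹ : ℝ) ^ n • u'‖ + σ n := by
    intro n h
    set f : E → ℝ := fun u => ‖h + (2⁻¹ : ℝ) ^ n • u‖
    have hbdd : BddBelow (f '' W n) := ⟨0, by rintro _ ⟨u, -, rfl⟩; positivity⟩
    obtain ⟨_, ⟨u, hu, rfl⟩, hlt⟩ :=
      exists_lt_of_csInf_lt ((hne n).image f) (lt_add_of_pos_right _ (hσ n))
    exact ⟨u, hu, fun u' hu' => hlt.le.trans (by gcongr; exact csInf_le hbdd ⟨u', hu', rfl⟩)⟩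
  choose pick hpick_mem hpick using happrox
  let H : ℕ → E := fun n => Nat.rec 0 (fun m h => h + (2⁻¹ : ℝ) ^ (m + 1) • pick m h) n
  have hH : ∀ n, H n = geomHead (fun i => pick i (H i)) n := by
    intro n
    induction n with
    | zero => rfl
    | succ n ih => rw [geomHead, Finset.sum_range_succ, ← geomHead, ← ih]
  exact ⟨fun n => pick n (H n), fun n => ⟨hpick_mem n _, by rw [← hH]; exact hpick n (H n)⟩⟩

variable [CompleteSpace E]

def geomTail (w : ℕ → E) (n : ℕ) : E :=
  ∑' j, (2⁻¹ : ℝ) ^ (j + 1) • w (n + j)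

theorem summable_inv_two_pow_succ_smul {w : ℕ → E} {M : ℝ} (hw : ∀ n, ‖w n‖ ≤ M) :
    Summable fun j => (2⁻¹ : ℝ) ^ (j + 1) • w j :=
  .of_norm_bounded (hasSum_inv_two_pow_succ.summable.mul_right M) fun j => by
    rw [norm_smul, norm_pow, norm_inv, Real.norm_two]
    exact mul_le_mul_of_nonneg_left (hw j) (by positivity)

theorem geomTail_eq_half_add {w : ℕ → E} {M : ℝ} (hw : ∀ n, ‖w n‖ ≤ M) (n : ℕ) :
    geomTail w n = (2⁻¹ : ℝ) • w n + (2⁻¹ : ℝ) • geomTail w (n + 1) := by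
  rw [geomTail, (summable_inv_two_pow_succ_smul fun j => hw (n + j)).tsum_eq_zero_add,
    geomTail, ← Summable.tsum_const_smul _ (summable_inv_two_pow_succ_smul fun j => hw _)]
  congr 1
  · simp
  · exact tsum_congr fun j => by
      rw [smul_smul, ← pow_succ', Nat.add_right_comm n 1 j, add_assoc n j]

theorem geomTail_zero_eq {w : ℕ → E} {M : ℝ} (hw : ∀ n, ‖w n‖ ≤ M) (n : ℕ) :
    geomTail w 0 = geomHead w n + (2⁻¹ : ℝ) ^ n • geomTail w n := by
  induction n with
  | zero => simp [geomHead]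
  | succ n ih =>
    rw [ih, geomTail_eq_half_add hw n, geomHead, geomHead, Finset.sum_range_succ, smul_add,
      smul_smul, smul_smul, ← pow_succ, add_assoc]

theorem geomTail_mem {W : ℕ → Set E} (hanti : Antitone W) (hconv : ∀ n, Convex ℝ (W n))
    (hclosed : ∀ n, IsClosed (W n)) {w : ℕ → E} (hwW : ∀ n, w n ∈ W n) {M : ℝ}
    (hw : ∀ n, ‖w n‖ ≤ M) (n : ℕ) : geomTail w n ∈ W n :=
  (hconv n).hasSum_mem (hclosed n) (fun j => by positivity) hasSum_inv_two_pow_succ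
    (summable_inv_two_pow_succ_smul fun j => hw (n + j)).hasSum
    fun j => hanti (Nat.le_add_right n j) (hwW (n + j))

theorem apply_le_apply_geomTail_add {W : ℕ → Set E} (hanti : Antitone W)
    (hconv : ∀ n, Convex ℝ (W n)) (hclosed : ∀ n, IsClosed (W n)) {w : ℕ → E} {M : ℝ}
    (hw : ∀ n, ‖w n‖ ≤ M) {η : ℕ → ℝ}
    (hgreedy : ∀ n, w n ∈ W n ∧ ∀ u ∈ W n, ‖geomHead w n + (2⁻¹ : ℝ) ^ n • w n‖ ≤
      ‖geomHead w n + (2⁻¹ : ℝ) ^ n • u‖ + (2⁻¹ : ℝ) ^ n * η n)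
    {b : StrongDual ℝ E} (hb : ‖b‖ ≤ 1) (hbT : b (geomTail w 0) = ‖geomTail w 0‖) (n : ℕ) :
    b (w n) ≤ b (geomTail w n) + η n := by
  have hT0 := geomTail_zero_eq hw n
  have hnorming : ‖geomTail w 0‖ = b (geomHead w n) + (2⁻¹ : ℝ) ^ n * b (geomTail w n) := by
    rw [← hbT, hT0, map_add, map_smul, smul_eq_mul]
  have hgreedy_n : ‖geomHead w n + (2⁻¹ : ℝ) ^ n • w n‖ ≤
      ‖geomTail w 0‖ + (2⁻¹ : ℝ) ^ n * η n := by
    rw [hT0]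
    exact (hgreedy n).2 _ (geomTail_mem hanti hconv hclosed (fun n => (hgreedy n).1) hw n)
  have hb_le := (le_abs_self _).trans
    (abs_apply_le_norm_of_norm_le_one hb (geomHead w n + (2⁻¹ : ℝ) ^ n • w n))
  rw [map_add, map_smul, smul_eq_mul] at hb_le
  have : (2⁻¹ : ℝ) ^ n * b (w n) ≤ (2⁻¹ : ℝ) ^ n * (b (geomTail w n) + η n) := by linarith
  exact le_of_mul_le_mul_left this (by positivity)

/-- Simons' construction: `T = geomTail w 0` for an almost greedy `w`. For `b` norming `T`,
`b (w n) ≤ b (geomTail w n) + η n` makes `n ↦ b (geomTail w n)` almost increasing, and the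
tails `geomTail w N ∈ W N` are controlled by `r`. -/
theorem exists_mem_norm_le_add_of_forall_apply_le {W : ℕ → Set E} (hanti : Antitone W)
    (hconv : ∀ n, Convex ℝ (W n)) (hclosed : ∀ n, IsClosed (W n)) (hne : ∀ n, (W n).Nonempty)
    {M : ℝ} (hM : ∀ u ∈ W 0, ‖u‖ ≤ M) {ε : ℝ} (hε : 0 < ε) :
    ∃ T ∈ W 0, ∀ b : StrongDual ℝ E, ‖b‖ ≤ 1 → b T = ‖T‖ →
      ∀ N r, (∀ u ∈ W N, b u ≤ r) → ‖T‖ ≤ r + ε := by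
  obtain ⟨w, hgreedy⟩ := exists_seq_almost_greedy hne
    (σ := fun n => (2⁻¹ : ℝ) ^ n * (ε * (2⁻¹ : ℝ) ^ (n + 1))) fun n => by positivity
  have hw : ∀ n, ‖w n‖ ≤ M := fun n => hM _ (hanti (Nat.zero_le n) (hgreedy n).1)
  have hwW : ∀ n, w n ∈ W n := fun n => (hgreedy n).1
  refine ⟨geomTail w 0, geomTail_mem hanti hconv hclosed hwW hw 0, fun b hb hbT N r hr => ?_⟩
  have hstep : ∀ n, b (geomTail w n) - b (geomTail w (n + 1)) ≤ ε * (2⁻¹ : ℝ) ^ (n + 1) := by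
    intro n
    have hkey := apply_le_apply_geomTail_add hanti hconv hclosed hw hgreedy hb hbT n
    have hsplit := congrArg b (geomTail_eq_half_add hw n)
    simp only [map_add, map_smul, smul_eq_mul] at hsplit
    linarith
  have hgeom : ∑ n ∈ Finset.range N, ε * (2⁻¹ : ℝ) ^ (n + 1) ≤ ε := by
    rw [← Finset.mul_sum]
    exact mul_le_of_le_one_right hε.le
      (sum_le_hasSum _ (fun n _ => by positivity) hasSum_inv_two_pow_succ)
  calc ‖geomTail w 0‖
      = b (geomTail w N) + ∑ n ∈ Finset.range N, (b (geomTail w n) - b (geomTail w (n + 1))) := by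
        rw [Finset.sum_range_sub', hbT]; ring
    _ ≤ r + ε := add_le_add (hr _ (geomTail_mem hanti hconv hclosed hwW hw N))
        ((Finset.sum_le_sum fun n _ => hstep n).trans hgeom)

theorem IsBoundary.zero_mem_closure_convexHull {B : Set (StrongDual ℝ E)} (hB : IsBoundary B)
    {z : ℕ → E} {M : ℝ} (hz : ∀ n, ‖z n‖ ≤ M)
    (hlim : ∀ b ∈ B, ∀ ε > 0, ∀ᶠ n in atTop, b (z n) ≤ ε) :
    (0 : E) ∈ closure (convexHull ℝ (range z)) := by
  set W : ℕ → Set E := fun n => closure (convexHull ℝ (z '' Ici n))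
  have hanti : Antitone W := fun m n hmn =>
    closure_mono (convexHull_mono (image_mono (Ici_subset_Ici.2 hmn)))
  have hW0 : W 0 = closure (convexHull ℝ (range z)) := by simp [W]
  have hM : ∀ u ∈ W 0, ‖u‖ ≤ M := by
    have : W 0 ⊆ Metric.closedBall 0 M := closure_minimal
      (convexHull_min (by rintro _ ⟨j, -, rfl⟩; simpa using hz j) (convex_closedBall 0 M))
      Metric.isClosed_closedBall
    exact fun u hu => by simpa using this hu
  have hclosed : ∀ n, IsClosed (W n) := fun n => isClosed_closure
  rw [← hW0, ← (hclosed 0).closure_eq, Metric.mem_closure_iff]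
  intro ε hε
  obtain ⟨T, hT, hTnorm⟩ := exists_mem_norm_le_add_of_forall_apply_le hanti
    (fun n => (convex_convexHull ℝ _).closure) hclosed
    (fun n => ⟨z n, subset_closure (subset_convexHull ℝ _ ⟨n, self_mem_Ici, rfl⟩)⟩) hM (half_pos hε)
  obtain ⟨b, hbB, hbT⟩ := hB.2 T
  obtain ⟨N, hN⟩ := eventually_atTop.1 (hlim b hbB (ε / 4) (by positivity))
  have hWN : ∀ u ∈ W N, b u ≤ ε / 4 := closure_minimal
    (convexHull_min (by rintro _ ⟨j, hj, rfl⟩; exact hN j hj)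
      (convex_halfSpace_le b.toLinearMap.isLinear _))
    (isClosed_le b.continuous continuous_const)
  have := hTnorm b (hB.1 b hbB).le hbT N _ hWN
  exact ⟨T, hT, by rw [dist_zero_left]; linarith⟩

theorem IsBoundary.mem_closure_convexHull_of_tendsto {B : Set (StrongDual ℝ E)}
    (hB : IsBoundary B) {x : ℕ → E} {M : ℝ} (hx : ∀ n, ‖x n‖ ≤ M) {v : E}
    (hlim : ∀ b ∈ B, Tendsto (fun n => b (x n)) atTop (𝓝 (b v))) :
    v ∈ closure (convexHull ℝ (range x)) := by
  have hzero := hB.zero_mem_closure_convexHull (z := fun n => x n - v) (M := M + ‖v‖)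
    (fun n => (norm_sub_le _ _).trans (by linarith [hx n])) fun b hb ε hε => by
      have : Tendsto (fun n => b (x n - v)) atTop (𝓝 0) := by
        simpa using (hlim b hb).sub_const (b v)
      exact ((tendsto_order.1 this).2 ε hε).mono fun n => le_of_lt
  have hrange : range (fun n => x n - v) = -v +ᵥ range x := by
    simp [sub_eq_neg_add, ← Set.image_vadd, Set.range_comp']
  rw [hrange, convexHull_vadd, closure_vadd, Set.mem_vadd_set_iff_neg_vadd_mem] at hzero
  simpa using hzero

theorem mem_closure_convexHull_of_apply_eq (hsep : ∀ u, (∀ i, e i u = 0) → u = 0)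
    {x : ℕ → E} {M : ℝ} (hx : ∀ n, ‖x n‖ ≤ M) {ξ : ι → ℝ}
    (hV : ∀ v, (∀ i, e i v = ξ i) → v ∈ closure (convexHull ℝ (range x)))
    {ν : ℕ → ℝ} (hν : ν ∈ subSimplex) {x₀ : E}
    (hx₀ : ∀ i, e i x₀ = ξ i + ∑' n, ν n * (e i (x n) - ξ i)) :
    x₀ ∈ closure (convexHull ℝ (range x)) := by
  have hxK : ∀ n, x n ∈ closure (convexHull ℝ (range x)) :=
    fun n => subset_closure (subset_convexHull ℝ _ ⟨n, rfl⟩)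
  obtain ⟨hs, hs1⟩ := hasSum_tsum_le_one_of_mem_subSimplex hν
  set s := ∑' n, ν n
  have hu : HasSum (fun n => ν n • x n) (∑' n, ν n • x n) :=
    (Summable.of_norm_bounded (hs.summable.mul_right M) fun n => by
      rw [norm_smul, Real.norm_of_nonneg (hν.1 n)]
      exact mul_le_mul_of_nonneg_left (hx n) (hν.1 n)).hasSum
  set u := ∑' n, ν n • x n
  have happly : ∀ i, e i x₀ = e i u + (1 - s) * ξ i := by
    intro i
    have hsum : HasSum (fun n => ν n * (e i (x n) - ξ i)) (e i u - s * ξ i) := by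
      simpa [mul_sub] using ((e i).hasSum hu).sub (hs.mul_right (ξ i))
    rw [hx₀ i, hsum.tsum_eq]
    ring
  obtain ⟨v, hvK, hx₀v⟩ : ∃ v ∈ closure (convexHull ℝ (range x)), x₀ = (1 - s) • v + u := by
    rcases eq_or_ne (1 - s) 0 with ht | ht
    · refine ⟨x 0, hxK 0, ?_⟩
      rw [ht, zero_smul, zero_add]
      exact sub_eq_zero.1 (hsep _ fun i => by rw [map_sub, happly i, ht]; ring)
    · refine ⟨(1 - s)⁻¹ • (x₀ - u), hV _ fun i => ?_, by rw [smul_inv_smul₀ ht]; abel⟩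
      rw [map_smul, map_sub, happly i, smul_eq_mul]
      field_simp
      ring
  rw [hx₀v]
  exact (convex_convexHull ℝ _).closure.sub_smul_add_hasSum_mem isClosed_closure hν.1 hs hs1
    hu hxK hvK

theorem closure_convexHull_eq_sigmaClosure {B : Set (StrongDual ℝ E)} (heB : ∀ i, e i ∈ B)
    (hsep : ∀ u, (∀ i, e i u = 0) → u = 0) {x : ℕ → E} {M : ℝ} (hx : ∀ n, ‖x n‖ ≤ M)
    {ξ : ι → ℝ} (hlim : ∀ i, Tendsto (fun n => e i (x n)) atTop (𝓝 (ξ i)))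
    (hV : ∀ v, (∀ i, e i v = ξ i) → v ∈ closure (convexHull ℝ (range x))) :
    closure (convexHull ℝ (range x)) = sigmaClosure B (convexHull ℝ (range x)) := by
  refine (closure_subset_sigmaClosure B _).antisymm
    ((sigmaClosure_anti (range_subset_iff.2 heB) _).trans fun x₀ hx₀ => ?_)
  obtain ⟨ν, hν, hx₀ν⟩ := exists_mem_subSimplex_of_mem_sigmaClosure hlim hx₀
  exact mem_closure_convexHull_of_apply_eq hsep hx hV hν hx₀ν

theorem IsBoundary.exists_subseq_closure_convexHull_eq_sigmaClosure
    {B : Set (StrongDual ℝ E)} (hB : IsBoundary B) {d : ℕ → StrongDual ℝ E}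
    (hdB : ∀ k, d k ∈ B) (hsep : ∀ u, (∀ k, d k u = 0) → u = 0) {x : ℕ → E} {M : ℝ}
    (hx : ∀ n, ‖x n‖ ≤ M) {ξ : ℕ → ℝ}
    (hlim : ∀ k, Tendsto (fun n => d k (x n)) atTop (𝓝 (ξ k))) :
    ∃ ψ : ℕ → ℕ, StrictMono ψ ∧
      closure (convexHull ℝ (range (x ∘ ψ))) = sigmaClosure B (convexHull ℝ (range (x ∘ ψ))) := by
  by_cases hgood : ∀ v, (∀ k, d k v = ξ k) → ∀ b ∈ B, Tendsto (fun n => b (x n)) atTop (𝓝 (b v))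
  · exact ⟨id, strictMono_id, closure_convexHull_eq_sigmaClosure hdB hsep hx hlim
      fun v hv => hB.mem_closure_convexHull_of_tendsto hx (hgood v hv)⟩
  push Not at hgood
  obtain ⟨v, hv, b, hbB, hbv⟩ := hgood
  obtain ⟨γ, hγ, ψ, hψ, hψlim⟩ := exists_subseq_tendsto_ne_of_not_tendsto
    (fun n => (abs_apply_le_norm_of_norm_le_one (hB.1 b hbB).le (x n)).trans (hx n)) hbv
  -- After adjoining `b` to the `d k`, no point realizes the limits.
  refine ⟨ψ, hψ, closure_convexHull_eq_sigmaClosure (e := fun o : Option ℕ => o.elim b d)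
    (ξ := fun o => o.elim γ ξ) (by rintro (_ | k); exacts [hbB, hdB k])
    (fun u hu => hsep u fun k => hu (some k)) (fun n => hx (ψ n))
    (by rintro (_ | k); exacts [hψlim, (hlim k).comp hψ.tendsto_atTop]) fun v' hv' => ?_⟩
  have hv'v : v' = v := sub_eq_zero.1 (hsep _ fun k => by
    rw [map_sub, sub_eq_zero]; exact (hv' (some k)).trans (hv k).symm)
  exact absurd (hv'v ▸ hv' none) hγ.symm

end Dual

theorem moors_wstar_separable (B : Set (StrongDual ℝ X)) (hB : IsBoundary B)
    (hsep : WeakStarSeparable B) (A : Set X) (hA : Bornology.IsBounded A)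
    (hinf : A.Infinite) :
    ∃ F ⊆ A, F.Countable ∧ F.Infinite ∧
      closure (convexHull ℝ F) = sigmaClosure B (convexHull ℝ F) := by
  obtain ⟨M, hM⟩ := hA.exists_norm_le
  obtain ⟨d, hdB, hdsep⟩ := hB.exists_seq_separating hsep
  set a : ℕ → X := fun n => hinf.natEmbedding A n
  have haA : ∀ n, a n ∈ A := fun n => (hinf.natEmbedding A n).2
  have ha : Function.Injective a := fun m n h => (hinf.natEmbedding A).injective (Subtype.ext h)
  obtain ⟨ξ, -, φ, hφ, hξ⟩ := (isCompact_univ_pi fun _ : ℕ => isCompact_Icc).tendsto_subseq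
    (x := fun n k => d k (a n)) fun n => Set.mem_univ_pi.2 fun k => abs_le.1
      ((abs_apply_le_norm_of_norm_le_one (hB.1 _ (hdB k)).le _).trans (hM _ (haA n)))
  obtain ⟨ψ, hψ, heq⟩ := hB.exists_subseq_closure_convexHull_eq_sigmaClosure hdB hdsep
    (x := a ∘ φ) (fun n => hM _ (haA _)) fun k => tendsto_pi_nhds.1 hξ k
  exact ⟨range (a ∘ φ ∘ ψ), range_subset_iff.2 fun n => haA _, countable_range _,
    infinite_range_of_injective (ha.comp (hφ.comp hψ).injective), heq⟩
end
end
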